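/- arXiv:1907.11535 — 2 statements merged into one kernel-verified Lean document; each statement's English description precedes it below -/
import Mathlib

section
/- Let T > 0, M0 > 0, and let u be a classical solution of problem (B) on [-1,1]×[0,T] with initial data u0 satisfying 1 ≤ u0(x) ≤ M0 on [-1,1]. Suppose h_T > 0 satisfies h_T > φ(1;h_T) + (π/2)·T + M0, where φ(x;h) := -(1/arctan h)·ln(cos((arctan h)·x)). Then u(x,t) ≤ φ(x;h_T) + (arctan h_T)·t + M0 ≤ φ(1;h_T) + M0 + (π/2)·T for all x ∈ [-1,1] and t ∈ [0,T]. -/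
/-!
With `c = arctan h`, the grim reaper `Φ(x) + c t`, `Φ(x) = -(1/c) log cos (c x)`, solves
`u_t = u_xx / (1 + u_x²)` exactly and has slope `tan (± c) = ± h` at `x = ± 1`. Lifting it by
`M0 + ε` and speeding it up by `ε` gives a strict supersolution of (B) on `[-1,1] × [0,T]`: the
hypothesis on `h` is exactly what makes the boundary inequalities strict. At a first touching
point of `u` with a strict supersolution, the maximum principle in `x` (`u_x = w_x`,
`u_xx ≤ w_xx`, or the one-sided inequality at an endpoint) and in `t` (`u_t ≥ w_t`) contradicts
the strict inequalities, so `u` stays below the barrier; then let `ε → 0`.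
-/

open Real

/-- Partial derivative in `x` of a function `u(x,t)`. -/
noncomputable def ux (u : ℝ → ℝ → ℝ) (x t : ℝ) : ℝ := deriv (fun y => u y t) x

/-- Second partial derivative in `x` of a function `u(x,t)`. -/
noncomputable def uxx (u : ℝ → ℝ → ℝ) (x t : ℝ) : ℝ := deriv (fun y => ux u y t) x

/-- Partial derivative in `t` of a function `u(x,t)`. -/
noncomputable def ut (u : ℝ → ℝ → ℝ) (x t : ℝ) : ℝ := deriv (fun s => u x s) t

/-- A classical solution of problem (B) on `[-1,1] × [0,T]` with initial data `u0`:
`u` and `u_x` are continuous on the closed rectangle, `u` is `C^{2,1}` in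
`(-1,1) × (0,T]` where it satisfies `u_t = u_xx/(1+u_x²)`, with boundary
conditions `u_x(±1,t) = ±u(±1,t)` and initial condition `u(·,0) = u0`. -/
def IsClassicalSolB (u : ℝ → ℝ → ℝ) (u0 : ℝ → ℝ) (T : ℝ) : Prop :=
  ContinuousOn (fun p : ℝ × ℝ => u p.1 p.2) (Set.Icc (-1 : ℝ) 1 ×ˢ Set.Icc (0 : ℝ) T) ∧
  ContinuousOn (fun p : ℝ × ℝ => ux u p.1 p.2) (Set.Icc (-1 : ℝ) 1 ×ˢ Set.Icc (0 : ℝ) T) ∧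
  (∀ t ∈ Set.Ioc (0 : ℝ) T, ∀ x ∈ Set.Ioo (-1 : ℝ) 1,
    DifferentiableAt ℝ (fun y => u y t) x ∧
    DifferentiableAt ℝ (fun y => ux u y t) x ∧
    DifferentiableAt ℝ (fun s => u x s) t ∧
    ut u x t = uxx u x t / (1 + ux u x t ^ 2)) ∧
  (∀ t ∈ Set.Ioc (0 : ℝ) T, ux u 1 t = u 1 t ∧ ux u (-1) t = - u (-1) t) ∧
  (∀ x ∈ Set.Icc (-1 : ℝ) 1, u x 0 = u0 x)

open Set Filter Topology

section OneSidedExtrema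

variable {f f' : ℝ → ℝ} {a b x D : ℝ}

theorem eventually_lt_of_hasDerivWithinAt_Ioi_pos (hf : HasDerivWithinAt f D (Ioi a) a)
    (hD : 0 < D) : ∀ᶠ y in 𝓝[>] a, f a < f y := by
  have h := (hasDerivWithinAt_iff_tendsto_slope' self_notMem_Ioi).1 hf
  filter_upwards [h.eventually (eventually_gt_nhds hD), self_mem_nhdsWithin] with y hy hay
  exact (slope_pos_iff hay).1 hy

theorem HasDerivWithinAt.nonneg_of_eventually_le_left (hf : HasDerivWithinAt f D (Iio a) a)
    (hle : ∀ᶠ y in 𝓝[<] a, f y ≤ f a) : 0 ≤ D := by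
  refine ge_of_tendsto ((hasDerivWithinAt_iff_tendsto_slope' self_notMem_Iio).1 hf) ?_
  filter_upwards [hle, self_mem_nhdsWithin] with y hy hya
  rw [slope_comm]
  exact (slope_nonneg_iff_of_le hya.le).2 hy

theorem eventually_lt_of_deriv_pos_right (hf : ContinuousWithinAt f (Ici a) a)
    (hf' : ∀ᶠ y in 𝓝[>] a, HasDerivAt f (f' y) y ∧ 0 < f' y) :
    ∀ᶠ y in 𝓝[>] a, f a < f y := by
  obtain ⟨r, har, hr⟩ := mem_nhdsGT_iff_exists_Ioo_subset.1 hf'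
  refine mem_nhdsGT_iff_exists_Ioo_subset.2 ⟨r, har, fun y hy => ?_⟩
  have hcont : ContinuousOn f (Icc a y) := by
    intro z hz
    rcases hz.1.eq_or_lt with rfl | haz
    · exact hf.mono Icc_subset_Ici_self
    · exact (hr ⟨haz, hz.2.trans_lt hy.2⟩).1.continuousAt.continuousWithinAt
  obtain ⟨ξ, hξ, hslope⟩ := exists_hasDerivAt_eq_slope f f' hy.1 hcont
    fun z hz => (hr ⟨hz.1, hz.2.trans hy.2⟩).1
  have hpos := (hr ⟨hξ.1, hξ.2.trans hy.2⟩).2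
  rw [hslope, lt_div_iff₀ (sub_pos.2 hy.1), zero_mul] at hpos
  exact sub_pos.1 hpos

theorem eventually_lt_of_deriv_neg_left (hf : ContinuousWithinAt f (Iic a) a)
    (hf' : ∀ᶠ y in 𝓝[<] a, HasDerivAt f (f' y) y ∧ f' y < 0) :
    ∀ᶠ y in 𝓝[<] a, f a < f y := by
  obtain ⟨l, hla, hl⟩ := mem_nhdsLT_iff_exists_Ioo_subset.1 hf'
  refine mem_nhdsLT_iff_exists_Ioo_subset.2 ⟨l, hla, fun y hy => ?_⟩
  have hcont : ContinuousOn f (Icc y a) := by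
    intro z hz
    rcases hz.2.eq_or_lt with rfl | hza
    · exact hf.mono Icc_subset_Iic_self
    · exact (hl ⟨hy.1.trans_le hz.1, hza⟩).1.continuousAt.continuousWithinAt
  obtain ⟨ξ, hξ, hslope⟩ := exists_hasDerivAt_eq_slope f f' hy.2 hcont
    fun z hz => (hl ⟨hy.1.trans hz.1, hz.2⟩).1
  have hneg := (hl ⟨hy.1.trans hξ.1, hξ.2⟩).2
  rw [hslope, div_lt_iff₀ (sub_pos.2 hy.2), zero_mul] at hneg
  exact sub_neg.1 hneg

theorem IsMaxOn.deriv_right_endpoint_nonneg (hab : a < b) (hmax : IsMaxOn f (Icc a b) b)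
    (hf : ContinuousOn f (Icc a b)) (hf' : ∀ y ∈ Ioo a b, HasDerivAt f (f' y) y)
    (hf'b : ContinuousWithinAt f' (Icc a b) b) : 0 ≤ f' b := by
  by_contra! hneg
  have hmem : ∀ᶠ y in 𝓝[<] b, y ∈ Ioo a b := Ioo_mem_nhdsLT hab
  have hf'neg : ∀ᶠ y in 𝓝[<] b, f' y < 0 :=
    (((continuousWithinAt_Icc_iff_Iic hab).1 hf'b).mono Iio_subset_Iic_self).eventually_lt_const
      hneg
  have hgt := eventually_lt_of_deriv_neg_left
    ((continuousWithinAt_Icc_iff_Iic hab).1 (hf b (right_mem_Icc.2 hab.le)))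
    (hf'neg.and hmem |>.mono fun y hy => ⟨hf' y hy.2, hy.1⟩)
  obtain ⟨y, hlt, hy⟩ := (hgt.and hmem).exists
  exact (isMaxOn_iff.1 hmax y (Ioo_subset_Icc_self hy)).not_gt hlt

theorem IsMaxOn.deriv_left_endpoint_nonpos (hab : a < b) (hmax : IsMaxOn f (Icc a b) a)
    (hf : ContinuousOn f (Icc a b)) (hf' : ∀ y ∈ Ioo a b, HasDerivAt f (f' y) y)
    (hf'a : ContinuousWithinAt f' (Icc a b) a) : f' a ≤ 0 := by
  by_contra! hpos
  have hmem : ∀ᶠ y in 𝓝[>] a, y ∈ Ioo a b := Ioo_mem_nhdsGT hab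
  have hf'pos : ∀ᶠ y in 𝓝[>] a, 0 < f' y :=
    (((continuousWithinAt_Icc_iff_Ici hab).1 hf'a).mono Ioi_subset_Ici_self).eventually_const_lt
      hpos
  have hgt := eventually_lt_of_deriv_pos_right
    ((continuousWithinAt_Icc_iff_Ici hab).1 (hf a (left_mem_Icc.2 hab.le)))
    (hf'pos.and hmem |>.mono fun y hy => ⟨hf' y hy.2, hy.1⟩)
  obtain ⟨y, hlt, hy⟩ := (hgt.and hmem).exists
  exact (isMaxOn_iff.1 hmax y (Ioo_subset_Icc_self hy)).not_gt hlt

theorem IsLocalMax.nonpos_of_hasDerivAt_deriv (hmax : IsLocalMax f x)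
    (hf : ∀ᶠ y in 𝓝 x, HasDerivAt f (f' y) y) (hf' : HasDerivAt f' D x) : D ≤ 0 := by
  by_contra! hD
  have hzero : f' x = 0 := hmax.hasDerivAt_eq_zero hf.self_of_nhds
  have hpos : ∀ᶠ y in 𝓝[>] x, 0 < f' y := by
    simpa only [hzero] using eventually_lt_of_hasDerivWithinAt_Ioi_pos hf'.hasDerivWithinAt hD
  have hgt := eventually_lt_of_deriv_pos_right hf.self_of_nhds.continuousAt.continuousWithinAt
    ((hf.filter_mono nhdsWithin_le_nhds).and hpos)
  obtain ⟨y, hlt, hle⟩ := (hgt.and (hmax.filter_mono nhdsWithin_le_nhds)).exists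
  exact hle.not_gt hlt

end OneSidedExtrema

section FirstTouching

variable {X : Type*} [TopologicalSpace X] [T2Space X] {s : Set X} {T : ℝ} {g : X → ℝ → ℝ}

theorem exists_first_nonneg_time (hs : IsCompact s)
    (hg : ContinuousOn (fun p : X × ℝ => g p.1 p.2) (s ×ˢ Icc 0 T))
    (h : ∃ x ∈ s, ∃ t ∈ Icc 0 T, 0 ≤ g x t) :
    ∃ t₁ ∈ Icc 0 T, (∃ x₁ ∈ s, 0 ≤ g x₁ t₁) ∧ ∀ x ∈ s, ∀ t ∈ Ico 0 t₁, g x t < 0 := by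
  set K := s ×ˢ Icc 0 T ∩ (fun p : X × ℝ => g p.1 p.2) ⁻¹' Ici 0
  have hK : IsCompact K := (hs.prod isCompact_Icc).of_isClosed_subset
    (hg.preimage_isClosed_of_isClosed (hs.isClosed.prod isClosed_Icc) isClosed_Ici)
    inter_subset_left
  obtain ⟨x, hx, t, ht, hgt⟩ := h
  obtain ⟨⟨x₁, t₁⟩, ⟨⟨hx₁, ht₁⟩, hg₁⟩, hmin⟩ :=
    hK.exists_isMinOn ⟨(x, t), ⟨hx, ht⟩, hgt⟩ continuous_snd.continuousOn
  refine ⟨t₁, ht₁, ⟨x₁, hx₁, hg₁⟩, fun y hy s hs => ?_⟩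
  by_contra! hge
  exact hs.2.not_ge (isMinOn_iff.1 hmin (y, s) ⟨⟨hy, hs.1, hs.2.le.trans ht₁.2⟩, hge⟩)

theorem exists_first_zero_time (hs : IsCompact s)
    (hg : ContinuousOn (fun p : X × ℝ => g p.1 p.2) (s ×ˢ Icc 0 T))
    (h0 : ∀ x ∈ s, g x 0 < 0) (h : ∃ x ∈ s, ∃ t ∈ Icc 0 T, 0 ≤ g x t) :
    ∃ t₁ ∈ Ioc 0 T, ∃ x₁ ∈ s, g x₁ t₁ = 0 ∧ (∀ x ∈ s, g x t₁ ≤ 0) ∧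
      ∀ x ∈ s, ∀ t ∈ Ico 0 t₁, g x t < 0 := by
  obtain ⟨t₁, ht₁, ⟨x₁, hx₁, hg₁⟩, hbefore⟩ := exists_first_nonneg_time hs hg h
  have ht₁pos : 0 < t₁ := ht₁.1.lt_of_ne fun h => (h0 x₁ hx₁).not_ge (h ▸ hg₁)
  have hat : ∀ x ∈ s, g x t₁ ≤ 0 := by
    intro x hx
    have hcont : ContinuousWithinAt (g x) (Ico 0 t₁) t₁ :=
      ((hg.comp (Continuous.prodMk_right x).continuousOn fun t ht => ⟨hx, ht⟩) t₁ ht₁).mono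
        fun t ht => ⟨ht.1, ht.2.le.trans ht₁.2⟩
    refine hcont.closure_le (by rw [closure_Ico ht₁pos.ne]; exact right_mem_Icc.2 ht₁pos.le)
      continuousWithinAt_const fun t ht => (hbefore x hx t ht).le
  exact ⟨t₁, ⟨ht₁pos, ht₁.2⟩, x₁, hx₁, le_antisymm (hat x₁ hx₁) hg₁, hat, hbefore⟩

end FirstTouching

/-- `wx`, `wxx`, `wt` play the roles of `w_x`, `w_xx`, `w_t`; they are explicit arguments so that
no junk value of `deriv` enters. -/
structure IsStrictSupersolB (w wx wxx wt : ℝ → ℝ → ℝ) (T : ℝ) : Prop where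
  continuousOn : ContinuousOn (fun p : ℝ × ℝ => w p.1 p.2) (Icc (-1 : ℝ) 1 ×ˢ Icc (0 : ℝ) T)
  hasDerivAt_x : ∀ t ∈ Ioc (0 : ℝ) T, ∀ x ∈ Icc (-1 : ℝ) 1,
    HasDerivAt (fun y => w y t) (wx x t) x ∧ HasDerivAt (fun y => wx y t) (wxx x t) x
  hasDerivAt_t : ∀ t ∈ Ioc (0 : ℝ) T, ∀ x ∈ Ioo (-1 : ℝ) 1,
    HasDerivAt (fun s => w x s) (wt x t) t
  strict_pde : ∀ t ∈ Ioc (0 : ℝ) T, ∀ x ∈ Ioo (-1 : ℝ) 1, wxx x t / (1 + wx x t ^ 2) < wt x t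
  strict_bc_right : ∀ t ∈ Ioc (0 : ℝ) T, w 1 t < wx 1 t
  strict_bc_left : ∀ t ∈ Ioc (0 : ℝ) T, wx (-1) t < -w (-1) t

theorem IsClassicalSolB.lt_of_isStrictSupersolB {u w wx wxx wt : ℝ → ℝ → ℝ} {u0 : ℝ → ℝ}
    {T : ℝ} (hu : IsClassicalSolB u u0 T) (hw : IsStrictSupersolB w wx wxx wt T)
    (h0 : ∀ x ∈ Icc (-1 : ℝ) 1, u0 x < w x 0) :
    ∀ x ∈ Icc (-1 : ℝ) 1, ∀ t ∈ Icc (0 : ℝ) T, u x t < w x t := by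
  obtain ⟨hu_cont, hux_cont, hu_int, hu_bc, hu_init⟩ := hu
  by_contra! htouch
  obtain ⟨t₁, ht₁, x₁, hx₁, hzero, hle, hbefore⟩ :=
    exists_first_zero_time (g := fun x t => u x t - w x t) isCompact_Icc
      (hu_cont.sub hw.continuousOn) (fun x hx => by simpa [hu_init x hx] using h0 x hx)
      (by obtain ⟨x, hx, t, ht, h⟩ := htouch; exact ⟨x, hx, t, ht, sub_nonneg.2 h⟩)
  have hslice : ∀ {v : ℝ → ℝ → ℝ},
      ContinuousOn (fun p : ℝ × ℝ => v p.1 p.2) (Icc (-1 : ℝ) 1 ×ˢ Icc (0 : ℝ) T) →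
      ContinuousOn (fun y => v y t₁) (Icc (-1 : ℝ) 1) := fun hv =>
    hv.comp (Continuous.prodMk_left t₁).continuousOn fun y hy => ⟨hy, Ioc_subset_Icc_self ht₁⟩
  set G : ℝ → ℝ := fun y => u y t₁ - w y t₁
  set F : ℝ → ℝ := fun y => ux u y t₁ - wx y t₁
  have hGmax : IsMaxOn G (Icc (-1) 1) x₁ := isMaxOn_iff.2 fun y hy => (hle y hy).trans hzero.ge
  have hGcont : ContinuousOn G (Icc (-1) 1) := (hslice hu_cont).sub (hslice hw.continuousOn)
  have hFcont : ContinuousOn F (Icc (-1) 1) := (hslice hux_cont).sub fun y hy =>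
    (hw.hasDerivAt_x t₁ ht₁ y hy).2.continuousAt.continuousWithinAt
  have hGderiv : ∀ y ∈ Ioo (-1 : ℝ) 1, HasDerivAt G (F y) y := fun y hy =>
    (hu_int t₁ ht₁ y hy).1.hasDerivAt.sub (hw.hasDerivAt_x t₁ ht₁ y (Ioo_subset_Icc_self hy)).1
  have hab : (-1 : ℝ) < 1 := by norm_num
  rcases hx₁.2.eq_or_lt with rfl | hx₁r
  · have hF := hGmax.deriv_right_endpoint_nonneg hab hGcont hGderiv (hFcont 1 hx₁)
    simp only [F] at hF
    linarith [hw.strict_bc_right t₁ ht₁, (hu_bc t₁ ht₁).1]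
  rcases hx₁.1.eq_or_lt with rfl | hx₁l
  · have hF := hGmax.deriv_left_endpoint_nonpos hab hGcont hGderiv (hFcont (-1) hx₁)
    simp only [F] at hF
    linarith [hw.strict_bc_left t₁ ht₁, (hu_bc t₁ ht₁).2]
  have hx₁I : x₁ ∈ Ioo (-1 : ℝ) 1 := ⟨hx₁l, hx₁r⟩
  obtain ⟨-, hux_diff, hut_diff, hpde⟩ := hu_int t₁ ht₁ x₁ hx₁I
  have hloc : IsLocalMax G x₁ := hGmax.isLocalMax (Icc_mem_nhds hx₁l hx₁r)
  have hux : ux u x₁ t₁ = wx x₁ t₁ :=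
    sub_eq_zero.1 (hloc.hasDerivAt_eq_zero (hGderiv x₁ hx₁I))
  have huxx : uxx u x₁ t₁ ≤ wxx x₁ t₁ := sub_nonpos.1 <|
    hloc.nonpos_of_hasDerivAt_deriv (eventually_of_mem (Ioo_mem_nhds hx₁l hx₁r) hGderiv)
      (hux_diff.hasDerivAt.sub (hw.hasDerivAt_x t₁ ht₁ x₁ hx₁).2)
  have hut : wt x₁ t₁ ≤ ut u x₁ t₁ := by
    refine sub_nonneg.1 <| HasDerivWithinAt.nonneg_of_eventually_le_left
      (hut_diff.hasDerivAt.sub (hw.hasDerivAt_t t₁ ht₁ x₁ hx₁I)).hasDerivWithinAt ?_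
    filter_upwards [Ico_mem_nhdsLT ht₁.1] with s hs
    simpa [hzero] using (hbefore x₁ hx₁ s hs).le
  have hquot : uxx u x₁ t₁ / (1 + ux u x₁ t₁ ^ 2) ≤ wxx x₁ t₁ / (1 + wx x₁ t₁ ^ 2) := by
    rw [hux]; gcongr
  linarith [hw.strict_pde t₁ ht₁ x₁ hx₁I]

/-- Profile of the grim reaper: `grimReaperProfile c x + c * t` translates with speed `c` and solves
`u_t = u_xx / (1 + u_x ^ 2)` exactly, since its `x`-derivatives are `tan (c x)` and
`c (1 + tan (c x) ^ 2)`. -/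
noncomputable def grimReaperProfile (c x : ℝ) : ℝ := -(1 / c) * Real.log (Real.cos (c * x))

section GrimReaper

variable {c x : ℝ}

theorem cos_mul_pos_of_mem_Icc (hc0 : 0 < c) (hc : c < π / 2) (hx : x ∈ Icc (-1 : ℝ) 1) :
    0 < Real.cos (c * x) := by
  have hle : c * x ≤ c := by simpa using mul_le_mul_of_nonneg_left hx.2 hc0.le
  have hge : -c ≤ c * x := by simpa using mul_le_mul_of_nonneg_left hx.1 hc0.le
  exact Real.cos_pos_of_mem_Ioo ⟨by linarith, by linarith⟩

theorem hasDerivAt_grimReaperProfile (hc0 : c ≠ 0) (hx : Real.cos (c * x) ≠ 0) :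
    HasDerivAt (grimReaperProfile c) (Real.tan (c * x)) x := by
  have hcos := (Real.hasDerivAt_cos (c * x)).comp x ((hasDerivAt_id x).const_mul c)
  refine ((hcos.log hx).const_mul (-(1 / c))).congr_deriv ?_
  rw [Function.comp_apply, Real.tan_eq_sin_div_cos]
  field_simp

theorem hasDerivAt_tan_mul (hx : Real.cos (c * x) ≠ 0) :
    HasDerivAt (fun y => Real.tan (c * y)) (c * (1 + Real.tan (c * x) ^ 2)) x := by
  refine ((Real.hasDerivAt_tan hx).comp x ((hasDerivAt_id x).const_mul c)).congr_deriv ?_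
  rw [Real.tan_eq_sin_div_cos]
  field_simp
  rw [add_comm, Real.sin_sq_add_cos_sq, mul_one]

theorem grimReaperProfile_nonneg (hc0 : 0 < c) (hc : c < π / 2) (hx : x ∈ Icc (-1 : ℝ) 1) :
    0 ≤ grimReaperProfile c x := by
  have hlog := Real.log_nonpos (cos_mul_pos_of_mem_Icc hc0 hc hx).le (Real.cos_le_one _)
  have : 0 < 1 / c := by positivity
  unfold grimReaperProfile
  nlinarith

theorem grimReaperProfile_le_one (hc0 : 0 < c) (hc : c < π / 2) (hx : x ∈ Icc (-1 : ℝ) 1) :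
    grimReaperProfile c x ≤ grimReaperProfile c 1 := by
  have habs : |c * x| ≤ c := by
    rw [abs_mul, abs_of_pos hc0]
    exact mul_le_of_le_one_right hc0.le (abs_le.2 hx)
  have hcos : Real.cos (c * 1) ≤ Real.cos (c * x) := by
    rw [← Real.cos_abs (c * x), mul_one]
    exact Real.cos_le_cos_of_nonneg_of_le_pi (abs_nonneg _) (by linarith [Real.pi_pos]) habs
  have hlog := Real.log_le_log (cos_mul_pos_of_mem_Icc hc0 hc (right_mem_Icc.2 (by norm_num)))
    hcos
  have : 0 < 1 / c := by positivity
  unfold grimReaperProfile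
  nlinarith

theorem grimReaperProfile_neg (c x : ℝ) : grimReaperProfile c (-x) = grimReaperProfile c x := by
  simp [grimReaperProfile]

end GrimReaper

theorem isStrictSupersolB_grimReaper {c k m T : ℝ} (hc0 : 0 < c) (hc : c < π / 2) (hk : c < k)
    (hbc : grimReaperProfile c 1 + k * T + m < Real.tan c) :
    IsStrictSupersolB (fun x t => grimReaperProfile c x + k * t + m) (fun x _ => Real.tan (c * x))
      (fun x _ => c * (1 + Real.tan (c * x) ^ 2)) (fun _ _ => k) T where
  continuousOn := by
    have hΦ : ContinuousOn (grimReaperProfile c) (Icc (-1) 1) := fun x hx =>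
      (hasDerivAt_grimReaperProfile hc0.ne' (cos_mul_pos_of_mem_Icc hc0 hc hx).ne').continuousAt
        |>.continuousWithinAt
    exact ((hΦ.comp continuous_fst.continuousOn fun p hp => hp.1).add
      (by fun_prop)).add continuousOn_const
  hasDerivAt_x t _ x hx :=
    have hcos := (cos_mul_pos_of_mem_Icc hc0 hc hx).ne'
    ⟨((hasDerivAt_grimReaperProfile hc0.ne' hcos).add_const _).add_const _, hasDerivAt_tan_mul hcos⟩
  hasDerivAt_t t _ x _ := by
    simpa using (((hasDerivAt_id t).const_mul k).const_add (grimReaperProfile c x)).add_const m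
  strict_pde t _ x _ := by
    rwa [mul_div_cancel_right₀ _ (by positivity)]
  strict_bc_right t ht := by
    have : k * t ≤ k * T := mul_le_mul_of_nonneg_left ht.2 (hc0.trans hk).le
    simp only [mul_one]
    linarith
  strict_bc_left t ht := by
    have : k * t ≤ k * T := mul_le_mul_of_nonneg_left ht.2 (hc0.trans hk).le
    simp only [mul_neg, mul_one, Real.tan_neg, grimReaperProfile_neg]
    linarith

theorem IsClassicalSolB.le_grimReaper {u : ℝ → ℝ → ℝ} {u0 : ℝ → ℝ} {T M0 c : ℝ}
    (hu : IsClassicalSolB u u0 T) (hu0 : ∀ x ∈ Icc (-1 : ℝ) 1, u0 x ≤ M0) (hc0 : 0 < c)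
    (hc : c < π / 2) (hgap : grimReaperProfile c 1 + c * T + M0 < Real.tan c) :
    ∀ x ∈ Icc (-1 : ℝ) 1, ∀ t ∈ Icc (0 : ℝ) T, u x t ≤ grimReaperProfile c x + c * t + M0 := by
  intro x hx t ht
  have hbarrier : ∀ᶠ ε in 𝓝[>] (0 : ℝ),
      u x t ≤ grimReaperProfile c x + (c + ε) * t + (M0 + ε) := by
    have hcont : ContinuousAt (fun ε : ℝ => grimReaperProfile c 1 + (c + ε) * T + (M0 + ε)) 0 := by
      fun_prop
    filter_upwards [self_mem_nhdsWithin,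
      nhdsWithin_le_nhds (hcont.eventually_lt continuousAt_const (by simpa using hgap))]
      with ε (hε : 0 < ε) hbc
    refine (hu.lt_of_isStrictSupersolB (isStrictSupersolB_grimReaper hc0 hc (by linarith) hbc)
      (fun y hy => ?_) x hx t ht).le
    linarith [hu0 y hy, grimReaperProfile_nonneg hc0 hc hy]
  have hlim : Tendsto (fun ε : ℝ => grimReaperProfile c x + (c + ε) * t + (M0 + ε)) (𝓝[>] 0)
      (𝓝 (grimReaperProfile c x + c * t + M0)) := by
    have hcont : Continuous fun ε : ℝ => grimReaperProfile c x + (c + ε) * t + (M0 + ε) := by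
      fun_prop
    simpa using (hcont.tendsto 0).mono_left nhdsWithin_le_nhds
  exact ge_of_tendsto hlim hbarrier

theorem stmt_5_general (T M0 : ℝ) (u0 : ℝ → ℝ)
    (hu0 : ∀ x ∈ Set.Icc (-1 : ℝ) 1, 1 ≤ u0 x ∧ u0 x ≤ M0)
    (u : ℝ → ℝ → ℝ) (hu : IsClassicalSolB u u0 T)
    (φ : ℝ → ℝ → ℝ)
    (hφ : ∀ x h : ℝ, φ x h = -(1 / Real.arctan h) * Real.log (Real.cos (Real.arctan h * x)))
    (hT' : ℝ) (hhT : 0 < hT')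
    (hbig : hT' > φ 1 hT' + (π / 2) * T + M0) :
    ∀ x ∈ Set.Icc (-1 : ℝ) 1, ∀ t ∈ Set.Icc (0 : ℝ) T,
      u x t ≤ φ x hT' + Real.arctan hT' * t + M0 ∧
      φ x hT' + Real.arctan hT' * t + M0 ≤ φ 1 hT' + M0 + (π / 2) * T := by
  intro x hx t ht
  set c := Real.arctan hT'
  have hc0 : 0 < c := Real.arctan_pos.2 hhT
  have hc : c < π / 2 := Real.arctan_lt_pi_div_two hT'
  have hΦ : ∀ y, φ y hT' = grimReaperProfile c y := fun y => hφ y hT'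
  have hT0 : 0 ≤ T := ht.1.trans ht.2
  simp only [hΦ] at hbig ⊢
  have hgap : grimReaperProfile c 1 + c * T + M0 < Real.tan c := by
    rw [Real.tan_arctan]
    linarith [mul_le_mul_of_nonneg_right hc.le hT0]
  have hct : c * t ≤ π / 2 * T :=
    (mul_le_mul_of_nonneg_left ht.2 hc0.le).trans (mul_le_mul_of_nonneg_right hc.le hT0)
  exact ⟨hu.le_grimReaper (fun y hy => (hu0 y hy).2) hc0 hc hgap x hx t ht,
    by linarith [grimReaperProfile_le_one hc0 hc hx]⟩

/-- upper bound. If `1 ≤ u0 ≤ M0` and `h_T > φ(1;h_T) + (π/2)T + M0`,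
where `φ(x;h) = -(1/arctan h)·ln(cos((arctan h)x))`, then
`u(x,t) ≤ φ(x;h_T) + (arctan h_T)t + M0 ≤ φ(1;h_T) + M0 + (π/2)T` on `[-1,1] × [0,T]`. -/
theorem stmt_5 (T M0 : ℝ) (hT : 0 < T) (hM0 : 0 < M0) (u0 : ℝ → ℝ)
    (hu0 : ∀ x ∈ Set.Icc (-1 : ℝ) 1, 1 ≤ u0 x ∧ u0 x ≤ M0)
    (u : ℝ → ℝ → ℝ) (hu : IsClassicalSolB u u0 T)
    (φ : ℝ → ℝ → ℝ)
    (hφ : ∀ x h : ℝ, φ x h = -(1 / Real.arctan h) * Real.log (Real.cos (Real.arctan h * x)))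
    (hT' : ℝ) (hhT : 0 < hT')
    (hbig : hT' > φ 1 hT' + (π / 2) * T + M0) :
    ∀ x ∈ Set.Icc (-1 : ℝ) 1, ∀ t ∈ Set.Icc (0 : ℝ) T,
      u x t ≤ φ x hT' + Real.arctan hT' * t + M0 ∧
      φ x hT' + Real.arctan hT' * t + M0 ≤ φ 1 hT' + M0 + (π / 2) * T :=
  stmt_5_general T M0 u0 hu0 u hu φ hφ hT' hhT hbig
end

section
/- Let u be a time-global classical solution of problem (B) with initial data u0 ∈ C^1([-1,1]) satisfying u0(x) ≤ φ0(x) + u0(0) for all x ∈ (-1,1), where φ0(x) := -(2/π)·ln(cos(πx/2)). Then u(x,t) < φ0(x) + u0(0) + (π/2)·t for all x ∈ (-1,1) and t > 0. -/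
/-!
The travelling grim reaper `w = φ0 + u0(0) + (π/2) t` solves the equation exactly
(`φ0'' = (π/2)(1 + φ0'^2)`), lies above `u` at `t = 0`, and blows up at `x = ±1`; so on a
rectangle `[-r, r] × [0, T]` with `r` close to `1` it dominates the bounded function `u` on the
lateral sides as well. To get a strict inequality one subtracts the barrier
`c e^{γt} cosh(αx)` (shifted to be `≤ 0` at `t = 0` and `≤ 1` on the sides) and shows that
`w - u - barrier` cannot attain its minimum over the rectangle at a parabolically interior point:
there `u_x`, `u_xx` and `u_t` are controlled by the derivatives of `w - barrier`, and inserting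
them into the equation gives a contradiction as soon as `α ≫ tan(πr/2)` and
`γ (1 + sup |u_x|^2) < α (α - π tan(πr/2))`. Choosing moreover `γT > αr` makes the barrier
strictly positive at time `T`.
-/

open Real

/-- A time-global classical solution of problem (B) with initial data `u0`:
`u` and `u_x` are continuous on `[-1,1] × [0,∞)`, `u` is `C^{2,1}` in
`(-1,1) × (0,∞)` where it satisfies `u_t = u_xx/(1+u_x²)`, with boundary
conditions `u_x(±1,t) = ±u(±1,t)` for `t > 0` and initial condition `u(·,0) = u0`. -/
def IsGlobalSolB (u : ℝ → ℝ → ℝ) (u0 : ℝ → ℝ) : Prop :=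
  ContinuousOn (fun p : ℝ × ℝ => u p.1 p.2) (Set.Icc (-1 : ℝ) 1 ×ˢ Set.Ici (0 : ℝ)) ∧
  ContinuousOn (fun p : ℝ × ℝ => ux u p.1 p.2) (Set.Icc (-1 : ℝ) 1 ×ˢ Set.Ici (0 : ℝ)) ∧
  (∀ t > (0 : ℝ), ∀ x ∈ Set.Ioo (-1 : ℝ) 1,
    DifferentiableAt ℝ (fun y => u y t) x ∧
    DifferentiableAt ℝ (fun y => ux u y t) x ∧
    DifferentiableAt ℝ (fun s => u x s) t ∧
    ut u x t = uxx u x t / (1 + ux u x t ^ 2)) ∧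
  (∀ t > (0 : ℝ), ux u 1 t = u 1 t ∧ ux u (-1) t = - u (-1) t) ∧
  (∀ x ∈ Set.Icc (-1 : ℝ) 1, u x 0 = u0 x)

open Set Filter Topology

theorem IsLocalMin.deriv_deriv_nonneg {f : ℝ → ℝ} {a : ℝ} (hmin : IsLocalMin f a)
    (hc : ContinuousAt f a) : 0 ≤ deriv (deriv f) a := by
  by_contra! hneg
  -- the second-derivative test would make `a` a local maximum too, so `f` is locally constant
  have hmax := isLocalMax_of_deriv_deriv_neg hneg hmin.deriv_eq_zero hc
  have hconst : f =ᶠ[𝓝 a] fun _ => f a :=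
    (hmin.and hmax).mono fun _ hy => le_antisymm hy.2 hy.1
  have : deriv (deriv f) a = 0 := by
    rw [hconst.deriv.deriv_eq]
    simp
  exact hneg.ne this

theorem IsLocalMin.nonneg_of_hasDerivAt_of_hasDerivAt {f f' : ℝ → ℝ} {a f'' : ℝ}
    (hmin : IsLocalMin f a) (hf : ∀ᶠ y in 𝓝 a, HasDerivAt f (f' y) y)
    (hf' : HasDerivAt f' f'' a) : 0 ≤ f'' := by
  have hderiv : deriv f =ᶠ[𝓝 a] f' := hf.mono fun _ hy => hy.deriv
  rw [← hf'.deriv, ← hderiv.deriv_eq]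
  exact hmin.deriv_deriv_nonneg hf.self_of_nhds.continuousAt

theorem HasDerivAt.nonpos_of_isMinOn_Icc {f : ℝ → ℝ} {f' a b : ℝ} (hf : HasDerivAt f f' b)
    (hab : a < b) (hmin : IsMinOn f (Icc a b) b) : f' ≤ 0 := by
  have hcone : a - b ∈ posTangentConeAt (Icc a b) b :=
    sub_mem_posTangentConeAt_of_segment_subset
      ((convex_Icc a b).segment_subset (right_mem_Icc.2 hab.le) (left_mem_Icc.2 hab.le))
  have := (hmin.localize : IsLocalMinOn f (Icc a b) b).hasFDerivWithinAt_nonneg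
    hf.hasDerivWithinAt.hasFDerivWithinAt hcone
  simp only [ContinuousLinearMap.toSpanSingleton_apply, smul_eq_mul] at this
  exact nonpos_of_mul_nonneg_right this (sub_neg.2 hab)

theorem nonneg_of_nonneg_on_parabolic_boundary {W : ℝ × ℝ → ℝ} {a b T : ℝ}
    (hW : ContinuousOn W (Icc a b ×ˢ Icc 0 T)) (hbot : ∀ x ∈ Icc a b, 0 ≤ W (x, 0))
    (hside : ∀ t ∈ Icc 0 T, 0 ≤ W (a, t) ∧ 0 ≤ W (b, t))
    (hint : ∀ x ∈ Ioo a b, ∀ t ∈ Ioc 0 T, ¬ IsMinOn W (Icc a b ×ˢ Icc 0 T) (x, t))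
    {p : ℝ × ℝ} (hp : p ∈ Icc a b ×ˢ Icc 0 T) : 0 ≤ W p := by
  obtain ⟨⟨x, t⟩, ⟨hx, ht⟩, hmin⟩ :=
    (isCompact_Icc.prod isCompact_Icc).exists_isMinOn ⟨p, hp⟩ hW
  refine le_trans ?_ (hmin hp)
  rcases ht.1.eq_or_lt with rfl | ht0
  · exact hbot x hx
  rcases hx.1.eq_or_lt with rfl | hax
  · exact (hside t ht).1
  rcases hx.2.eq_or_lt with rfl | hxb
  · exact (hside t ht).2
  exact absurd hmin (hint x ⟨hax, hxb⟩ t ⟨ht0, ht.2⟩)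

noncomputable def grimReaper (x : ℝ) : ℝ := -(2 / π) * log (cos (π * x / 2))

theorem cos_pi_mul_div_two_pos {x : ℝ} (hx : x ∈ Ioo (-1 : ℝ) 1) : 0 < cos (π * x / 2) := by
  apply cos_pos_of_mem_Ioo
  constructor <;> nlinarith [pi_pos, hx.1, hx.2]

theorem grimReaper_neg (x : ℝ) : grimReaper (-x) = grimReaper x := by
  simp only [grimReaper, mul_neg, neg_div, cos_neg]

theorem hasDerivAt_grimReaper {x : ℝ} (hx : x ∈ Ioo (-1 : ℝ) 1) :
    HasDerivAt grimReaper (tan (π * x / 2)) x := by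
  have hcos := cos_pi_mul_div_two_pos hx
  have h := ((((hasDerivAt_id x).const_mul π).div_const 2).cos.log hcos.ne').const_mul (-(2 / π))
  refine h.congr_deriv ?_
  rw [tan_eq_sin_div_cos, id]
  field_simp

theorem hasDerivAt_tan_pi_mul_div_two {x : ℝ} (hx : x ∈ Ioo (-1 : ℝ) 1) :
    HasDerivAt (fun y => tan (π * y / 2)) (π / 2 * (1 + tan (π * x / 2) ^ 2)) x := by
  have hcos := (cos_pi_mul_div_two_pos hx).ne'
  have h := (hasDerivAt_tan hcos).comp x (((hasDerivAt_id x).const_mul π).div_const 2)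
  refine h.congr_deriv ?_
  rw [tan_eq_sin_div_cos, div_pow]
  field_simp
  rw [cos_sq_add_sin_sq]

theorem abs_tan_pi_mul_div_two_le {x r : ℝ} (hx : |x| ≤ r) (hr : r < 1) :
    |tan (π * x / 2)| ≤ tan (π * r / 2) := by
  have hmem : ∀ y, |y| ≤ r → π * y / 2 ∈ Ioo (-(π / 2)) (π / 2) := fun y hy => by
    obtain ⟨h1, h2⟩ := abs_le.1 hy
    constructor <;> nlinarith [pi_pos]
  have hr0 : |r| ≤ r := by rw [abs_of_nonneg ((abs_nonneg x).trans hx)]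
  have hnr : |-r| ≤ r := by rwa [abs_neg]
  rw [abs_le, ← tan_neg, ← neg_div, ← mul_neg]
  obtain ⟨hrx, hxr⟩ := abs_le.1 hx
  exact ⟨strictMonoOn_tan.monotoneOn (hmem _ hnr) (hmem _ hx) (by gcongr),
    strictMonoOn_tan.monotoneOn (hmem _ hx) (hmem _ hr0) (by gcongr)⟩

theorem tendsto_grimReaper_nhdsLT_one : Tendsto grimReaper (𝓝[<] 1) atTop := by
  have hcos : Tendsto (fun x => cos (π * x / 2)) (𝓝[<] 1) (𝓝[>] 0) := by
    refine tendsto_nhdsWithin_iff.2 ⟨?_, ?_⟩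
    · have : Continuous fun x => cos (π * x / 2) := by fun_prop
      simpa using this.continuousAt.tendsto.mono_left (nhdsWithin_le_nhds (a := (1 : ℝ)))
    · filter_upwards [Ioo_mem_nhdsLT (show (-1 : ℝ) < 1 by norm_num)] with x hx
      exact cos_pi_mul_div_two_pos hx
  exact (tendsto_log_nhdsGT_zero.comp hcos).const_mul_atBot_of_neg
    (neg_lt_zero.2 (div_pos two_pos pi_pos))

noncomputable def barrier (c α γ x t : ℝ) : ℝ := c * exp (γ * t) * cosh (α * x)

section Barrier

variable {c α γ : ℝ}

theorem barrier_pos (hc : 0 < c) (x t : ℝ) : 0 < barrier c α γ x t := by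
  unfold barrier; positivity

theorem barrier_le_of_abs_le {x r : ℝ} (hc : 0 ≤ c) (hx : |x| ≤ |r|) (t : ℝ) :
    barrier c α γ x t ≤ barrier c α γ r t := by
  unfold barrier
  gcongr
  rw [cosh_le_cosh, abs_mul, abs_mul]
  gcongr

theorem barrier_le_of_le {t T : ℝ} (hc : 0 ≤ c) (hγ : 0 ≤ γ) (ht : t ≤ T) (x : ℝ) :
    barrier c α γ x t ≤ barrier c α γ x T := by
  unfold barrier
  gcongr

theorem barrier_zero_lt {x r T : ℝ} (hc : 0 < c) (hr : 0 ≤ α * r) (hrT : α * r < γ * T) :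
    barrier c α γ r 0 < barrier c α γ x T := by
  have hcosh : cosh (α * r) ≤ exp (α * r) := by
    rw [← cosh_add_sinh]
    linarith [sinh_nonneg_iff.2 hr]
  calc barrier c α γ r 0 = c * cosh (α * r) := by simp [barrier]
    _ ≤ c * exp (α * r) := by gcongr
    _ < c * exp (γ * T) := by gcongr
    _ ≤ c * exp (γ * T) * cosh (α * x) :=
      le_mul_of_one_le_right (by positivity) (one_le_cosh _)

theorem hasDerivAt_barrier_fst (x t : ℝ) :
    HasDerivAt (fun y => barrier c α γ y t) (α * (c * exp (γ * t) * sinh (α * x))) x := by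
  refine (((hasDerivAt_id x).const_mul α).cosh.const_mul (c * exp (γ * t))).congr_deriv ?_
  simp only [id]; ring

theorem hasDerivAt_deriv_barrier_fst (x t : ℝ) :
    HasDerivAt (fun y => α * (c * exp (γ * t) * sinh (α * y)))
      (α ^ 2 * barrier c α γ x t) x := by
  refine ((((hasDerivAt_id x).const_mul α).sinh.const_mul
    (c * exp (γ * t))).const_mul α).congr_deriv ?_
  simp only [barrier, id]; ring

theorem hasDerivAt_barrier_snd (x t : ℝ) :
    HasDerivAt (fun s => barrier c α γ x s) (γ * barrier c α γ x t) t := by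
  refine ((((hasDerivAt_id t).const_mul γ).exp.const_mul c).mul_const
    (cosh (α * x))).congr_deriv ?_
  simp only [barrier, id]; ring

theorem abs_deriv_barrier_fst_le (hc : 0 ≤ c) (hα : 0 ≤ α) (x t : ℝ) :
    |α * (c * exp (γ * t) * sinh (α * x))| ≤ α * barrier c α γ x t := by
  have hsinh : |sinh (α * x)| ≤ cosh (α * x) := by
    rw [abs_sinh, ← cosh_abs (α * x)]
    exact (sinh_lt_cosh _).le
  rw [abs_mul, abs_mul, abs_of_nonneg hα, abs_of_nonneg (by positivity), barrier]
  gcongr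

end Barrier

theorem exists_barrier_exponents {P K r T : ℝ} (hP : 0 ≤ P) (hr : 0 ≤ r) (hT : 0 < T) :
    ∃ α γ : ℝ, 0 < α ∧ 0 ≤ γ ∧ γ * (1 + K ^ 2) < α * (α - π * P) ∧
      α * r < γ * T := by
  set L := (r + 1) * (1 + K ^ 2) / T
  have hL : 0 < L := by positivity
  refine ⟨π * P + L + 1, (π * P + L + 1) * (r + 1) / T, by positivity, by positivity, ?_, ?_⟩
  · have : (π * P + L + 1) * (r + 1) / T * (1 + K ^ 2) = (π * P + L + 1) * L := by
      simp only [L]; field_simp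
    rw [this, show π * P + L + 1 - π * P = L + 1 by ring]
    nlinarith [pi_pos]
  · rw [div_mul_cancel₀ _ hT.ne']
    nlinarith [pi_pos]

/- Read with `q = φ0'`, `S` the `x`-derivative of the barrier `A` and `q - S = u_x`: the upper
bound for `u_xx` at an interior minimum of `w - u - A` is smaller than the lower bound for
`u_t (1 + u_x^2)`. -/
theorem barrier_strict_supersolution {q S A P K α γ : ℝ} (hq : |q| ≤ P) (hS : |S| ≤ α * A)
    (hK : |q - S| ≤ K) (hA : 0 < A) (hγ : 0 ≤ γ)
    (hαγ : γ * (1 + K ^ 2) < α * (α - π * P)) :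
    π / 2 * (1 + q ^ 2) - α ^ 2 * A < (π / 2 - γ * A) * (1 + (q - S) ^ 2) := by
  have hqS : 2 * q * S ≤ 2 * P * (α * A) := by
    have := abs_mul q S ▸ le_abs_self (q * S)
    nlinarith [mul_le_mul hq hS (abs_nonneg S) ((abs_nonneg q).trans hq)]
  have hK2 : (q - S) ^ 2 ≤ K ^ 2 := sq_le_sq' (abs_le.1 hK).1 (abs_le.1 hK).2
  have := mul_le_mul_of_nonneg_left hK2 (mul_nonneg hγ hA.le)
  nlinarith [mul_le_mul_of_nonneg_left hqS pi_pos.le, mul_nonneg pi_pos.le (sq_nonneg S),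
    mul_lt_mul_of_pos_right hαγ hA]

def SolvesCurveShortening (u : ℝ → ℝ → ℝ) : Prop :=
  ∀ t > (0 : ℝ), ∀ x ∈ Ioo (-1 : ℝ) 1,
    DifferentiableAt ℝ (fun y => u y t) x ∧ DifferentiableAt ℝ (fun y => ux u y t) x ∧
    DifferentiableAt ℝ (fun s => u x s) t ∧ ut u x t = uxx u x t / (1 + ux u x t ^ 2)

noncomputable def grimReaperGap (u : ℝ → ℝ → ℝ) (κ c α γ : ℝ) (p : ℝ × ℝ) : ℝ :=
  grimReaper p.1 + π / 2 * p.2 + κ - u p.1 p.2 - barrier c α γ p.1 p.2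

section GrimReaperGap

variable {u : ℝ → ℝ → ℝ} {κ c α γ : ℝ}

theorem continuousOn_grimReaperGap {r T : ℝ}
    (hu : ContinuousOn (fun p : ℝ × ℝ => u p.1 p.2) (Icc (-1 : ℝ) 1 ×ˢ Ici (0 : ℝ)))
    (hr : r < 1) : ContinuousOn (grimReaperGap u κ c α γ) (Icc (-r) r ×ˢ Icc 0 T) := by
  have hQ : Icc (-r) r ×ˢ Icc 0 T ⊆ Icc (-1 : ℝ) 1 ×ˢ Ici (0 : ℝ) :=
    prod_mono (Icc_subset_Icc (by linarith) hr.le) Icc_subset_Ici_self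
  have hG : ContinuousOn (fun p : ℝ × ℝ => grimReaper p.1) (Icc (-r) r ×ˢ Icc 0 T) :=
    fun p hp => ((hasDerivAt_grimReaper ⟨by linarith [hp.1.1], by linarith [hp.1.2]⟩
      ).continuousAt.comp continuous_fst.continuousAt).continuousWithinAt
  unfold grimReaperGap barrier
  exact (((hG.add (by fun_prop)).add continuousOn_const).sub (hu.mono hQ)).sub (by fun_prop)

theorem hasDerivAt_grimReaperGap_fst (hu : SolvesCurveShortening u) {x t : ℝ} (ht : 0 < t)
    (hx : x ∈ Ioo (-1 : ℝ) 1) :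
    HasDerivAt (fun y => grimReaperGap u κ c α γ (y, t))
      (tan (π * x / 2) - ux u x t - α * (c * exp (γ * t) * sinh (α * x))) x :=
  ((((hasDerivAt_grimReaper hx).add_const (π / 2 * t)).add_const κ).sub
    (hu t ht x hx).1.hasDerivAt).sub (hasDerivAt_barrier_fst x t)

theorem hasDerivAt_deriv_grimReaperGap_fst (hu : SolvesCurveShortening u) {x t : ℝ}
    (ht : 0 < t) (hx : x ∈ Ioo (-1 : ℝ) 1) :
    HasDerivAt (fun y => tan (π * y / 2) - ux u y t - α * (c * exp (γ * t) * sinh (α * y)))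
      (π / 2 * (1 + tan (π * x / 2) ^ 2) - uxx u x t - α ^ 2 * barrier c α γ x t) x :=
  ((hasDerivAt_tan_pi_mul_div_two hx).sub (hu t ht x hx).2.1.hasDerivAt).sub
    (hasDerivAt_deriv_barrier_fst x t)

theorem hasDerivAt_grimReaperGap_snd (hu : SolvesCurveShortening u) {x t : ℝ} (ht : 0 < t)
    (hx : x ∈ Ioo (-1 : ℝ) 1) :
    HasDerivAt (fun s => grimReaperGap u κ c α γ (x, s))
      (π / 2 - ut u x t - γ * barrier c α γ x t) t := by
  refine ((((((hasDerivAt_id t).const_mul (π / 2)).const_add (grimReaper x)).add_const κ).sub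
    (hu t ht x hx).2.2.1.hasDerivAt).sub (hasDerivAt_barrier_snd x t)).congr_deriv ?_
  simp only [mul_one]
  rfl

theorem not_isMinOn_grimReaperGap (hu : SolvesCurveShortening u) {r T K x t : ℝ} (hr : r < 1)
    (hK : ∀ p ∈ Icc (-r) r ×ˢ Icc 0 T, |ux u p.1 p.2| ≤ K) (hc : 0 < c) (hα : 0 ≤ α)
    (hγ : 0 ≤ γ) (hαγ : γ * (1 + K ^ 2) < α * (α - π * tan (π * r / 2)))
    (hx : x ∈ Ioo (-r) r) (ht : t ∈ Ioc 0 T) :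
    ¬ IsMinOn (grimReaperGap u κ c α γ) (Icc (-r) r ×ˢ Icc 0 T) (x, t) := by
  intro hmin
  have hx1 : x ∈ Ioo (-1 : ℝ) 1 := ⟨by linarith [hx.1], hx.2.trans hr⟩
  have hlocal : IsLocalMin (fun y => grimReaperGap u κ c α γ (y, t)) x := by
    filter_upwards [isOpen_Ioo.mem_nhds hx] with y hy
    exact hmin ⟨Ioo_subset_Icc_self hy, Ioc_subset_Icc_self ht⟩
  have hux : ux u x t = tan (π * x / 2) - α * (c * exp (γ * t) * sinh (α * x)) := by
    linarith [hlocal.hasDerivAt_eq_zero (hasDerivAt_grimReaperGap_fst hu ht.1 hx1)]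
  have huxx : uxx u x t ≤ π / 2 * (1 + tan (π * x / 2) ^ 2) - α ^ 2 * barrier c α γ x t := by
    have hslice : ∀ᶠ y in 𝓝 x, HasDerivAt (fun y => grimReaperGap u κ c α γ (y, t))
        (tan (π * y / 2) - ux u y t - α * (c * exp (γ * t) * sinh (α * y))) y := by
      filter_upwards [isOpen_Ioo.mem_nhds hx1] with y hy
      exact hasDerivAt_grimReaperGap_fst hu ht.1 hy
    linarith [hlocal.nonneg_of_hasDerivAt_of_hasDerivAt hslice
      (hasDerivAt_deriv_grimReaperGap_fst hu ht.1 hx1)]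
  have hut : π / 2 - γ * barrier c α γ x t ≤ ut u x t := by
    have hmin_t : IsMinOn (fun s => grimReaperGap u κ c α γ (x, s)) (Icc 0 t) t :=
      fun s hs => hmin ⟨Ioo_subset_Icc_self hx, hs.1, hs.2.trans ht.2⟩
    linarith [(hasDerivAt_grimReaperGap_snd hu ht.1 hx1).nonpos_of_isMinOn_Icc ht.1 hmin_t]
  have hstrict := barrier_strict_supersolution
    (abs_tan_pi_mul_div_two_le (abs_le.2 ⟨hx.1.le, hx.2.le⟩) hr)
    (abs_deriv_barrier_fst_le hc.le hα x t)
    (hux ▸ hK (x, t) ⟨Ioo_subset_Icc_self hx, Ioc_subset_Icc_self ht⟩)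
    (barrier_pos hc x t) hγ hαγ
  have hpde := (hu t ht.1 x hx1).2.2.2
  have hpos : 0 < 1 + ux u x t ^ 2 := by positivity
  rw [← hux] at hstrict
  rw [eq_div_iff hpos.ne'] at hpde
  nlinarith

theorem grimReaperGap_initial_nonneg {u0 : ℝ → ℝ} {r x : ℝ}
    (hinit : ∀ x ∈ Ioo (-1 : ℝ) 1, u0 x ≤ grimReaper x + u0 0)
    (hu0 : ∀ x ∈ Icc (-1 : ℝ) 1, u x 0 = u0 x) (hr : r < 1) (hc : 0 ≤ c)
    (hx : x ∈ Icc (-r) r) :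
    0 ≤ grimReaperGap u (u0 0 + barrier c α γ r 0) c α γ (x, 0) := by
  have hx1 : x ∈ Ioo (-1 : ℝ) 1 := ⟨by linarith [hx.1], hx.2.trans_lt hr⟩
  have hbarrier := barrier_le_of_abs_le (α := α) (γ := γ) hc
    ((abs_le.2 hx).trans (le_abs_self r)) 0
  simp only [grimReaperGap, mul_zero, add_zero, hu0 x (Ioo_subset_Icc_self hx1)]
  linarith [hinit x hx1]

theorem grimReaperGap_lateral_nonneg {r T y t : ℝ} (hy : |y| = r) (ht : t ∈ Icc 0 T)
    (hc : 0 ≤ c) (hγ : 0 ≤ γ) (hbound : u y t + barrier c α γ r T ≤ grimReaper r + κ) :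
    0 ≤ grimReaperGap u κ c α γ (y, t) := by
  have hbarrier : barrier c α γ y t ≤ barrier c α γ r T :=
    (barrier_le_of_abs_le hc (by rw [hy, abs_of_nonneg ((abs_nonneg y).trans_eq hy)]) t).trans
      (barrier_le_of_le hc hγ ht.2 r)
  have hG : grimReaper y = grimReaper r := by
    rw [← hy]
    rcases abs_choice y with h | h <;> rw [h]
    exact (grimReaper_neg y).symm
  simp only [grimReaperGap, hG]
  nlinarith [pi_pos, ht.1]

end GrimReaperGap

theorem stmt_12_general (u0 : ℝ → ℝ)
    (φ0 : ℝ → ℝ) (hφ0 : ∀ x : ℝ, φ0 x = -(2 / π) * Real.log (Real.cos (π * x / 2)))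
    (hinit : ∀ x ∈ Set.Ioo (-1 : ℝ) 1, u0 x ≤ φ0 x + u0 0)
    (u : ℝ → ℝ → ℝ) (hu : IsGlobalSolB u u0) :
    ∀ t > (0 : ℝ), ∀ x ∈ Set.Ioo (-1 : ℝ) 1,
      u x t < φ0 x + u0 0 + (π / 2) * t := by
  obtain rfl : φ0 = grimReaper := funext hφ0
  intro T hT x₀ hx₀
  obtain ⟨hcont, hcont_ux, hpde, -, hu0⟩ := hu
  obtain ⟨B, hB⟩ := (isCompact_Icc.prod isCompact_Icc).exists_bound_of_continuousOn
    (hcont.mono (prod_mono_right (Icc_subset_Ici_self : Icc (0 : ℝ) T ⊆ Ici 0)))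
  obtain ⟨r, hrB, hx₀r, hr1⟩ : ∃ r, B + 1 - u0 0 ≤ grimReaper r ∧ r ∈ Ioo |x₀| 1 :=
    ((tendsto_grimReaper_nhdsLT_one.eventually_ge_atTop _).and
      (Ioo_mem_nhdsLT (abs_lt.2 hx₀))).exists
  have hr0 : 0 ≤ r := (abs_nonneg x₀).trans hx₀r.le
  obtain ⟨K, hK⟩ := (isCompact_Icc.prod isCompact_Icc).exists_bound_of_continuousOn
    (hcont_ux.mono (prod_mono (Icc_subset_Icc (neg_le_neg hr1.le) hr1.le)
      (Icc_subset_Ici_self : Icc (0 : ℝ) T ⊆ Ici 0)))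
  obtain ⟨α, γ, hα, hγ, hαγ, hαr⟩ := exists_barrier_exponents (K := K)
    ((abs_nonneg _).trans (abs_tan_pi_mul_div_two_le (abs_of_nonneg hr0).le hr1)) hr0 hT
  set c := (exp (γ * T) * cosh (α * r))⁻¹
  have hc : 0 < c := by positivity
  have hlateral : ∀ y, |y| = r → ∀ t ∈ Icc 0 T,
      0 ≤ grimReaperGap u (u0 0 + barrier c α γ r 0) c α γ (y, t) := by
    intro y hy t ht
    refine grimReaperGap_lateral_nonneg hy ht hc.le hγ ?_
    have hbarrier : barrier c α γ r T = 1 := by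
      rw [barrier, mul_assoc]
      exact inv_mul_cancel₀ (by positivity)
    have huB := (le_abs_self _).trans (hB (y, t) ⟨abs_le.1 (hy.trans_le hr1.le), ht⟩)
    linarith [barrier_pos (α := α) (γ := γ) hc r 0]
  have hgap := nonneg_of_nonneg_on_parabolic_boundary (continuousOn_grimReaperGap hcont hr1)
    (fun x hx => grimReaperGap_initial_nonneg hinit hu0 hr1 hc.le hx)
    (fun t ht => ⟨hlateral (-r) (by rw [abs_neg, abs_of_nonneg hr0]) t ht,
      hlateral r (abs_of_nonneg hr0) t ht⟩)
    (fun x hx t ht => not_isMinOn_grimReaperGap hpde hr1 hK hc hα.le hγ hαγ hx ht)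
    (p := (x₀, T)) ⟨abs_le.1 hx₀r.le, hT.le, le_rfl⟩
  have hbarrier := barrier_zero_lt (x := x₀) hc (by positivity) hαr
  simp only [grimReaperGap] at hgap
  linarith

/-- if `u0(x) ≤ φ0(x) + u0(0)` on `(-1,1)`, with
`φ0(x) = -(2/π)·ln(cos(πx/2))`, then
`u(x,t) < φ0(x) + u0(0) + (π/2)t` for all `x ∈ (-1,1)`, `t > 0`. -/
theorem stmt_12 (u0 : ℝ → ℝ)
    (hu0C1 : ContDiffOn ℝ 1 u0 (Set.Icc (-1 : ℝ) 1))
    (φ0 : ℝ → ℝ) (hφ0 : ∀ x : ℝ, φ0 x = -(2 / π) * Real.log (Real.cos (π * x / 2)))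
    (hinit : ∀ x ∈ Set.Ioo (-1 : ℝ) 1, u0 x ≤ φ0 x + u0 0)
    (u : ℝ → ℝ → ℝ) (hu : IsGlobalSolB u u0) :
    ∀ t > (0 : ℝ), ∀ x ∈ Set.Ioo (-1 : ℝ) 1,
      u x t < φ0 x + u0 0 + (π / 2) * t :=
  stmt_12_general u0 φ0 hφ0 hinit u hu
end
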